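/- arXiv:1604.04588 — 3 statements merged into one kernel-verified Lean document; each statement's English description precedes it below -/
import Mathlib

section
/- Suppose (T, T_I, T_L, M, M_I, CTL, V) is an equilibrium of the HIV system with V = 0 and all components nonnegative. Then necessarily T = s1/δ1, T_I = 0, T_L = 0, M = s2/δ4, M_I = 0, and CTL = s3/δ6; i.e., E_NI is the unique nonnegative virus-free steady state. -/
/-- Any componentwise-nonnegative equilibrium of the HIV system with `V = 0`
must be the non-infective steady state
`E_NI = (s1/δ1, 0, 0, s2/δ4, 0, s3/δ6, 0)`. -/
theorem virus_free_equilibrium_unique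
    (s1 s2 s3 p1 C1 K1 K2 K3 K4 K5 K6 K7 K8 K9 K10 K11 K12 K13
      δ1 δ2 δ3 δ4 δ5 δ6 δ7 α1 ψ : ℝ)
    (hs1 : 0 < s1) (hs2 : 0 < s2) (hs3 : 0 < s3) (hp1 : 0 < p1) (hC1 : 0 < C1)
    (hK1 : 0 < K1) (hK2 : 0 < K2) (hK3 : 0 < K3) (hK4 : 0 < K4) (hK5 : 0 < K5)
    (hK6 : 0 < K6) (hK7 : 0 < K7) (hK8 : 0 < K8) (hK9 : 0 < K9) (hK10 : 0 < K10)
    (hK11 : 0 < K11) (hK12 : 0 < K12) (hK13 : 0 < K13)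
    (hδ1 : 0 < δ1) (hδ2 : 0 < δ2) (hδ3 : 0 < δ3) (hδ4 : 0 < δ4) (hδ5 : 0 < δ5)
    (hδ6 : 0 < δ6) (hδ7 : 0 < δ7) (hα1 : 0 < α1) (hψ0 : 0 < ψ) (hψ1 : ψ < 1)
    (T TI TL M MI CTL V : ℝ)
    (hTnn : 0 ≤ T) (hTInn : 0 ≤ TI) (hTLnn : 0 ≤ TL) (hMnn : 0 ≤ M)
    (hMInn : 0 ≤ MI) (hCTLnn : 0 ≤ CTL) (hVnn : 0 ≤ V)
    (hV : V = 0)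
    (e1 : s1 + p1 * T * V / (C1 + V) - δ1 * T - (K1 * V + K2 * MI) * T = 0)
    (e2 : ψ * (K1 * V + K2 * MI) * T + α1 * TL - δ2 * TI - K3 * TI * CTL = 0)
    (e3 : (1 - ψ) * (K1 * V + K2 * MI) * T - α1 * TL - δ3 * TL = 0)
    (e4 : s2 + K4 * M * V - K5 * M * V - δ4 * M = 0)
    (e5 : K5 * M * V - δ5 * MI - K6 * MI * CTL = 0)
    (e6 : s3 + (K7 * TI + K8 * MI) * CTL - δ6 * CTL = 0)
    (e7 : K9 * TI + K10 * MI - K11 * T * V - (K12 + K13) * M * V - δ7 * V = 0) :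
    T = s1 / δ1 ∧ TI = 0 ∧ TL = 0 ∧ M = s2 / δ4 ∧ MI = 0 ∧ CTL = s3 / δ6 := by
  subst hV
  simp only [mul_zero, zero_mul, add_zero, zero_add, sub_zero, zero_div, zero_sub] at e1 e2 e3 e4 e5 e6 e7
  have hMI : MI = 0 := by
    have h : MI * (δ5 + K6 * CTL) = 0 := by linarith [e5]
    rcases mul_eq_zero.mp h with h | h
    · exact h
    · have : 0 < δ5 + K6 * CTL := by positivity
      linarith
  subst hMI
  simp only [mul_zero, add_zero, zero_mul, sub_zero] at e1 e2 e3 e5 e6 e7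
  have hTI : TI = 0 := by
    have h : K9 * TI = 0 := by linarith [mul_nonneg hK10.le hMInn]
    rcases mul_eq_zero.mp h with h | h
    · linarith
    · exact h
  subst hTI
  simp only [mul_zero, zero_mul, add_zero, zero_add, zero_sub, sub_zero] at e2 e6
  have hTL : TL = 0 := by
    have h : α1 * TL = 0 := by linarith [mul_nonneg (mul_nonneg hK3.le hTInn) hCTLnn]
    rcases mul_eq_zero.mp h with h | h
    · linarith
    · exact h
  refine ⟨?_, rfl, hTL, ?_, rfl, ?_⟩
  · field_simp; linarith
  · field_simp; linarith
  · field_simp; linarith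
end

section
/- At any equilibrium of the HIV system with V = 0, M_I ≠ 0, and K7·K10 ≠ K8·K9, the infected populations satisfy T_I = K10·ω and M_I = −K9·ω, where ω = (s3·K6 + δ5·δ6)/(δ5·(K7·K10 − K8·K9)); in particular T_I and M_I have opposite signs, so one of them is negative. -/
/-- At any equilibrium of the HIV system with `V = 0`, `M_I ≠ 0`, and
`K7·K10 ≠ K8·K9`, the infected populations satisfy `T_I = K10·ω` and
`M_I = -K9·ω` with `ω = (s3·K6 + δ5·δ6)/(δ5·(K7·K10 - K8·K9))`; in particular
`T_I` and `M_I` have opposite signs. -/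
theorem virus_free_infected_components
    (s1 s2 s3 p1 C1 K1 K2 K3 K4 K5 K6 K7 K8 K9 K10 K11 K12 K13
      δ1 δ2 δ3 δ4 δ5 δ6 δ7 α1 ψ : ℝ)
    (hs1 : 0 < s1) (hs2 : 0 < s2) (hs3 : 0 < s3) (hp1 : 0 < p1) (hC1 : 0 < C1)
    (hK1 : 0 < K1) (hK2 : 0 < K2) (hK3 : 0 < K3) (hK4 : 0 < K4) (hK5 : 0 < K5)
    (hK6 : 0 < K6) (hK7 : 0 < K7) (hK8 : 0 < K8) (hK9 : 0 < K9) (hK10 : 0 < K10)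
    (hK11 : 0 < K11) (hK12 : 0 < K12) (hK13 : 0 < K13)
    (hδ1 : 0 < δ1) (hδ2 : 0 < δ2) (hδ3 : 0 < δ3) (hδ4 : 0 < δ4) (hδ5 : 0 < δ5)
    (hδ6 : 0 < δ6) (hδ7 : 0 < δ7) (hα1 : 0 < α1) (hψ0 : 0 < ψ) (hψ1 : ψ < 1)
    (T TI TL M MI CTL V : ℝ)
    (hV : V = 0) (hMI : MI ≠ 0) (hgap : K7 * K10 ≠ K8 * K9)
    (e1 : s1 + p1 * T * V / (C1 + V) - δ1 * T - (K1 * V + K2 * MI) * T = 0)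
    (e2 : ψ * (K1 * V + K2 * MI) * T + α1 * TL - δ2 * TI - K3 * TI * CTL = 0)
    (e3 : (1 - ψ) * (K1 * V + K2 * MI) * T - α1 * TL - δ3 * TL = 0)
    (e4 : s2 + (K4 - K5) * M * V - δ4 * M = 0)
    (e5 : K5 * M * V - δ5 * MI - K6 * MI * CTL = 0)
    (e6 : s3 + (K7 * TI + K8 * MI) * CTL - δ6 * CTL = 0)
    (e7 : K9 * TI + K10 * MI - K11 * T * V - (K12 + K13) * M * V - δ7 * V = 0) :
    TI = K10 * ((s3 * K6 + δ5 * δ6) / (δ5 * (K7 * K10 - K8 * K9))) ∧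
    MI = -K9 * ((s3 * K6 + δ5 * δ6) / (δ5 * (K7 * K10 - K8 * K9))) ∧
    TI * MI < 0 := by
  subst hV
  have hD : K7 * K10 - K8 * K9 ≠ 0 := sub_ne_zero.mpr hgap
  have hδ5' : δ5 ≠ 0 := ne_of_gt hδ5
  have hCTL : δ5 + K6 * CTL = 0 := by
    have h : MI * (δ5 + K6 * CTL) = 0 := by linear_combination -e5
    rcases mul_eq_zero.mp h with h | h
    · exact absurd h hMI
    · exact h
  have h6 : s3 * K6 - δ5 * (K7 * TI + K8 * MI) + δ6 * δ5 = 0 := by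
    linear_combination K6 * e6 - (K7 * TI + K8 * MI - δ6) * hCTL
  have h7 : K9 * TI + K10 * MI = 0 := by linarith [e7]
  set ω := (s3 * K6 + δ5 * δ6) / (δ5 * (K7 * K10 - K8 * K9)) with hω
  have hden : δ5 * (K7 * K10 - K8 * K9) ≠ 0 := mul_ne_zero hδ5' hD
  have hTI : TI = K10 * ω := by
    rw [hω, ← mul_div_assoc, eq_div_iff hden]
    linear_combination (-K10) * h6 - δ5 * K8 * h7
  have hMI2 : MI = -K9 * ω := by
    rw [hω, ← mul_div_assoc, eq_div_iff hden]
    linear_combination K9 * h6 + δ5 * K7 * h7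
  refine ⟨hTI, hMI2, ?_⟩
  have hωne : ω ≠ 0 := by
    rw [hω]; exact div_ne_zero (by positivity) hden
  rw [hTI, hMI2]
  nlinarith [mul_self_pos.mpr hωne, mul_pos hK9 hK10]
end

section
/- Let C be the active subspace matrix of f, with eigendecomposition C = WΛWᵀ and eigenvector w_i corresponding to eigenvalue λ_i. If λ_i = 0, then (∇f(x))ᵀ w_i = 0 for ρ-almost every x; i.e., f has vanishing directional derivative along w_i almost everywhere with respect to ρ. -/
/-!
Since `C` is the Gram matrix of the partial derivatives in `L²(ρ)`, its quadratic form is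
`wᵀ C w = ∫ ((∇f)ᵀ w)² ρ`. When `C w = 0` this integral of a nonnegative function vanishes, so
`((∇f)ᵀ w)² ρ = 0` almost everywhere: `(∇f)ᵀ w` can only be nonzero where the density vanishes,
which is a null set for `ρ dx`.
-/

open MeasureTheory Matrix

section

variable {X ι : Type*} [Fintype ι] [MeasurableSpace X] {μ : Measure X}

lemma sq_sum_mul_mul_eq_sum_sum (a w : ι → ℝ) (r : ℝ) :
    (∑ i, a i * w i) ^ 2 * r = ∑ i, ∑ j, w i * w j * (a i * a j * r) := by
  simp only [sq, Finset.sum_mul, Finset.mul_sum]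
  refine Finset.sum_congr rfl fun i _ => Finset.sum_congr rfl fun j _ => ?_
  ring

lemma integrable_sq_sum_mul_mul {a : ι → X → ℝ} {ρ : X → ℝ}
    (hint : ∀ i j, Integrable (fun x => a i x * a j x * ρ x) μ) (w : ι → ℝ) :
    Integrable (fun x => (∑ i, a i x * w i) ^ 2 * ρ x) μ := by
  simp_rw [sq_sum_mul_mul_eq_sum_sum (a · _)]
  exact integrable_finsetSum _ fun i _ =>
    integrable_finsetSum _ fun j _ => (hint i j).const_mul _

lemma integral_sq_sum_mul_mul_eq_dotProduct_mulVec {a : ι → X → ℝ} {ρ : X → ℝ}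
    (hint : ∀ i j, Integrable (fun x => a i x * a j x * ρ x) μ) (w : ι → ℝ) :
    ∫ x, (∑ i, a i x * w i) ^ 2 * ρ x ∂μ =
      w ⬝ᵥ (of fun i j => ∫ x, a i x * a j x * ρ x ∂μ) *ᵥ w := by
  simp_rw [sq_sum_mul_mul_eq_sum_sum (a · _)]
  rw [integral_finsetSum _ fun i _ =>
    integrable_finsetSum _ fun j _ => (hint i j).const_mul _]
  refine Finset.sum_congr rfl fun i _ => ?_
  rw [integral_finsetSum _ fun j _ => (hint i j).const_mul _, mulVec, dotProduct,
    Finset.mul_sum]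
  refine Finset.sum_congr rfl fun j _ => ?_
  rw [integral_const_mul, of_apply]
  ring

lemma ae_withDensity_eq_zero_of_integral_sq_mul_eq_zero {g ρ : X → ℝ} (hg : Measurable g)
    (hρ : ∀ x, 0 ≤ ρ x) (hint : Integrable (fun x => g x ^ 2 * ρ x) μ)
    (h0 : ∫ x, g x ^ 2 * ρ x ∂μ = 0) :
    ∀ᵐ x ∂μ.withDensity (fun x => ENNReal.ofReal (ρ x)), g x = 0 := by
  have hs : MeasurableSet {x | ¬ g x = 0} := (hg (measurableSet_singleton 0)).compl
  have hvanish : ∀ᵐ x ∂μ, g x ^ 2 * ρ x = 0 :=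
    (integral_eq_zero_iff_of_nonneg (fun x => mul_nonneg (sq_nonneg _) (hρ x)) hint).mp h0
  rw [ae_iff, withDensity_apply _ hs]
  refine (lintegral_congr_ae ?_).trans lintegral_zero
  rw [Filter.EventuallyEq, ae_restrict_iff' hs]
  filter_upwards [hvanish] with x hx hgx
  simp [(mul_eq_zero.mp hx).resolve_left (pow_ne_zero 2 hgx)]

end

theorem active_subspace_zero_eigenvalue_general
    (m : ℕ) (f : (Fin m → ℝ) → ℝ) (ρ : (Fin m → ℝ) → ℝ)
    (hρ : ∀ x, 0 ≤ ρ x)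
    (hint : ∀ i j : Fin m, IntegrableOn
      (fun x => fderiv ℝ f x (Pi.single i 1) * fderiv ℝ f x (Pi.single j 1) * ρ x)
      (Set.Icc (fun _ : Fin m => (-1 : ℝ)) (fun _ : Fin m => (1 : ℝ))))
    (C : Matrix (Fin m) (Fin m) ℝ)
    (hC : ∀ i j : Fin m, C i j =
      ∫ x in Set.Icc (fun _ : Fin m => (-1 : ℝ)) (fun _ : Fin m => (1 : ℝ)),
        fderiv ℝ f x (Pi.single i 1) * fderiv ℝ f x (Pi.single j 1) * ρ x)
    (w : Fin m → ℝ) (lam : ℝ)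
    (heig : C.mulVec w = lam • w) (hlam : lam = 0) :
    ∀ᵐ x ∂((volume.restrict
        (Set.Icc (fun _ : Fin m => (-1 : ℝ)) (fun _ : Fin m => (1 : ℝ)))).withDensity
        (fun x => ENNReal.ofReal (ρ x))),
      ∑ i, fderiv ℝ f x (Pi.single i 1) * w i = 0 := by
  have hCw : C *ᵥ w = 0 := by rw [heig, hlam, zero_smul]
  refine ae_withDensity_eq_zero_of_integral_sq_mul_eq_zero
    (Finset.measurable_sum _ fun i _ => (measurable_fderiv_apply_const ℝ f _).mul_const _)
    hρ (integrable_sq_sum_mul_mul hint w) ?_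
  rw [integral_sq_sum_mul_mul_eq_dotProduct_mulVec hint w, show of _ = C from ext fun i j => (hC i j).symm, hCw,
    dotProduct_zero]

/-- If a unit eigenvector `w` of the active subspace matrix `C` has eigenvalue
`λ = 0`, then the directional derivative of `f` along `w` vanishes for
`ρ`-almost every `x` in the cube. -/
theorem active_subspace_zero_eigenvalue
    (m : ℕ) (f : (Fin m → ℝ) → ℝ) (ρ : (Fin m → ℝ) → ℝ)
    (hf : ContDiff ℝ 1 f) (hρ : ∀ x, 0 ≤ ρ x)
    (hρ1 : ∫ x in Set.Icc (fun _ : Fin m => (-1 : ℝ)) (fun _ : Fin m => (1 : ℝ)), ρ x = 1)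
    (hint : ∀ i j : Fin m, IntegrableOn
      (fun x => fderiv ℝ f x (Pi.single i 1) * fderiv ℝ f x (Pi.single j 1) * ρ x)
      (Set.Icc (fun _ : Fin m => (-1 : ℝ)) (fun _ : Fin m => (1 : ℝ))))
    (C : Matrix (Fin m) (Fin m) ℝ)
    (hC : ∀ i j : Fin m, C i j =
      ∫ x in Set.Icc (fun _ : Fin m => (-1 : ℝ)) (fun _ : Fin m => (1 : ℝ)),
        fderiv ℝ f x (Pi.single i 1) * fderiv ℝ f x (Pi.single j 1) * ρ x)
    (w : Fin m → ℝ) (lam : ℝ)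
    (hunit : ∑ i, w i ^ 2 = 1)
    (heig : C.mulVec w = lam • w) (hlam : lam = 0) :
    ∀ᵐ x ∂((volume.restrict
        (Set.Icc (fun _ : Fin m => (-1 : ℝ)) (fun _ : Fin m => (1 : ℝ)))).withDensity
        (fun x => ENNReal.ofReal (ρ x))),
      ∑ i, fderiv ℝ f x (Pi.single i 1) * w i = 0 :=
  active_subspace_zero_eigenvalue_general m f ρ hρ hint C hC w lam heig hlam
end
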